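/- arXiv:0908.3404 — 2 statements merged into one kernel-verified Lean document; each statement's English description precedes it below -/
import Mathlib

section
/- Let C = (y_{i_1}, y_{i_2}, …, y_{i_m}) be a cycle in P̂. If C belongs to a facet of Q_P, then C is a special cycle. -/
open scoped Classical

/-- The poset `P̂ = P ∪ {0̂, 1̂}`: `none` is the minimum `y₀ = 0̂`,
`some none` is the maximum `y_{d+1} = 1̂`, and `some (some i)` is `y_{i+1} ∈ P`. -/
abbrev HatP (d : ℕ) := Option (Option (Fin d))

def hatBot (d : ℕ) : HatP d := none

def hatTop (d : ℕ) : HatP d := some none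

/-- The order of `P̂` induced by a partial order `P` on `Fin d`. -/
def hatLE {d : ℕ} (P : PartialOrder (Fin d)) : HatP d → HatP d → Prop
  | none, _ => True
  | some _, none => False
  | some none, some none => True
  | some none, some (some _) => False
  | some (some _), some none => True
  | some (some a), some (some b) => P.le a b

def hatLT {d : ℕ} (P : PartialOrder (Fin d)) (a b : HatP d) : Prop :=
  hatLE P a b ∧ a ≠ b

/-- `b` covers `a` in `P̂`. -/
def IsCover {d : ℕ} (P : PartialOrder (Fin d)) (a b : HatP d) : Prop :=
  hatLT P a b ∧ ∀ z, ¬ (hatLT P a z ∧ hatLT P z b)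

/-- `{a, b}` is an edge of the Hasse diagram of `P̂` (undirected). -/
def IsEdge {d : ℕ} (P : PartialOrder (Fin d)) (a b : HatP d) : Prop :=
  IsCover P a b ∨ IsCover P b a

/-- `chi y = e_i` if `y = y_i ∈ P`, and `0` if `y ∈ {0̂, 1̂}`. -/
def chi {d : ℕ} : HatP d → (Fin d → ℝ)
  | some (some i) => fun k => if k = i then 1 else 0
  | _ => 0

/-- `ρ(e)` for the edge `e = {a, b}` with `a < b`. -/
def rho {d : ℕ} (a b : HatP d) : Fin d → ℝ := chi a - chi b

/-- `ρ(e)` for an unordered edge `{a, b}`. -/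
noncomputable def rhoE {d : ℕ} (P : PartialOrder (Fin d)) (a b : HatP d) : Fin d → ℝ :=
  if hatLT P a b then rho a b else rho b a

/-- The set `{ρ(e) : e an edge of P̂}`. -/
def edgeVecs {d : ℕ} (P : PartialOrder (Fin d)) : Set (Fin d → ℝ) :=
  {v | ∃ a b, IsCover P a b ∧ v = rho a b}

/-- The polytope `Q_P`, convex hull of `{ρ(e) : e an edge of P̂}`. -/
def QPoly {d : ℕ} (P : PartialOrder (Fin d)) : Set (Fin d → ℝ) :=
  convexHull ℝ (edgeVecs P)

/-- A point of `ℝ^d` all of whose coordinates are integers. -/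
def IsIntegralPt {d : ℕ} (x : Fin d → ℝ) : Prop := ∀ k, ∃ z : ℤ, x k = (z : ℝ)

/-- A facet of a polytope: an exposed face of dimension `d - 1`. -/
def IsFacet {d : ℕ} (Q F : Set (Fin d → ℝ)) : Prop :=
  IsExposed ℝ Q F ∧ Module.finrank ℝ ↥(vectorSpan ℝ F) = d - 1

/-- A cycle `(c 0, c 1, …, c m)` in (the Hasse diagram of) `P̂`;
indices are cyclic in `Fin (m+1)`. -/
def IsCycle {d : ℕ} (P : PartialOrder (Fin d)) {m : ℕ} (c : Fin (m + 1) → HatP d) : Prop :=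
  2 ≤ m ∧ Function.Injective c ∧ ∀ j, IsEdge P (c j) (c (j + 1))

/-- A cycle is special if it has as many ascending steps as descending steps. -/
def CycleSpecial {d : ℕ} (P : PartialOrder (Fin d)) {m : ℕ} (c : Fin (m + 1) → HatP d) : Prop :=
  Nat.card {j : Fin (m + 1) // hatLT P (c j) (c (j + 1))} =
    Nat.card {j : Fin (m + 1) // hatLT P (c (j + 1)) (c j)}

/-- A very special cycle: special, and not containing both `0̂` and `1̂`. -/
def VerySpecialCycle {d : ℕ} (P : PartialOrder (Fin d)) {m : ℕ}
    (c : Fin (m + 1) → HatP d) : Prop :=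
  IsCycle P c ∧ CycleSpecial P c ∧
    ¬ (hatBot d ∈ Set.range c ∧ hatTop d ∈ Set.range c)

/-- A path `(c 0, c 1, …, c m)` in (the Hasse diagram of) `P̂`. -/
def IsPath {d : ℕ} (P : PartialOrder (Fin d)) {m : ℕ} (c : Fin (m + 1) → HatP d) : Prop :=
  Function.Injective c ∧ ∀ j : Fin m, IsEdge P (c j.castSucc) (c j.succ)

/-- A path is special if it has as many ascending steps as descending steps. -/
def PathSpecial {d : ℕ} (P : PartialOrder (Fin d)) {m : ℕ} (c : Fin (m + 1) → HatP d) : Prop :=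
  Nat.card {j : Fin m // hatLT P (c j.castSucc) (c j.succ)} =
    Nat.card {j : Fin m // hatLT P (c j.succ) (c j.castSucc)}

/-- `μ` is the level function of a special cycle `c`. -/
def IsMuCycle {d : ℕ} (P : PartialOrder (Fin d)) {m : ℕ} (c : Fin (m + 1) → HatP d)
    (μ : Fin (m + 1) → ℕ) : Prop :=
  (∀ j, (hatLT P (c j) (c (j + 1)) → μ (j + 1) = μ j + 1) ∧
        (hatLT P (c (j + 1)) (c j) → μ j = μ (j + 1) + 1)) ∧
  ∃ j, μ j = 0

/-- `μ` is the level function of a special path `c`. -/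
def IsMuPath {d : ℕ} (P : PartialOrder (Fin d)) {m : ℕ} (c : Fin (m + 1) → HatP d)
    (μ : Fin (m + 1) → ℕ) : Prop :=
  (∀ j : Fin m, (hatLT P (c j.castSucc) (c j.succ) → μ j.succ = μ j.castSucc + 1) ∧
        (hatLT P (c j.succ) (c j.castSucc) → μ j.castSucc = μ j.succ + 1)) ∧
  ∃ j, μ j = 0

/-- The distance `dist_{P̂}(y, z)`: the smallest `s` for which there is a saturated
chain `y = z_0 < z_1 < ⋯ < z_s = z` in `P̂`. -/
noncomputable def hatDist {d : ℕ} (P : PartialOrder (Fin d)) (y z : HatP d) : ℕ :=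
  sInf {s | ∃ c : Fin (s + 1) → HatP d, c 0 = y ∧ c (Fin.last s) = z ∧
    ∀ j : Fin s, IsCover P (c j.castSucc) (c j.succ)}

/-- `P̂` has a very special cycle satisfying the inequalities (1) and (2). -/
def HasBadCycle {d : ℕ} (P : PartialOrder (Fin d)) : Prop :=
  ∃ (m : ℕ) (c : Fin (m + 1) → HatP d) (μ : Fin (m + 1) → ℕ),
    VerySpecialCycle P c ∧ IsMuCycle P c μ ∧
    (∀ a b, hatLT P (c b) (c a) →
      (μ a : ℤ) - (μ b : ℤ) ≤ (hatDist P (c b) (c a) : ℤ)) ∧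
    (∀ a b, (μ a : ℤ) - (μ b : ℤ) ≤
      (hatDist P (hatBot d) (c a) : ℤ) + (hatDist P (c b) (hatTop d) : ℤ))

/-- `P̂` has a special path from `0̂` to `1̂` satisfying the inequality (3). -/
def HasBadPath {d : ℕ} (P : PartialOrder (Fin d)) : Prop :=
  ∃ (m : ℕ) (c : Fin (m + 1) → HatP d) (μ : Fin (m + 1) → ℕ),
    IsPath P c ∧ PathSpecial P c ∧ c 0 = hatBot d ∧ c (Fin.last m) = hatTop d ∧
    IsMuPath P c μ ∧
    (∀ a b, hatLT P (c b) (c a) →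
      (μ a : ℤ) - (μ b : ℤ) ≤ (hatDist P (c b) (c a) : ℤ))

/-- A polytope is simplicial (ℚ-factorial) if each of its proper faces is a simplex. -/
def SimplicialPoly {d : ℕ} (Q : Set (Fin d → ℝ)) : Prop :=
  ∀ F : Set (Fin d → ℝ), IsExposed ℝ Q F → F ≠ Q →
    AffineIndependent ℝ (fun p : Set.extremePoints ℝ F => (p : Fin d → ℝ))

/-- A polytope is smooth if the vertices of each facet form a ℤ-basis of `ℤ^d`. -/
def SmoothPoly {d : ℕ} (Q : Set (Fin d → ℝ)) : Prop :=
  ∀ F : Set (Fin d → ℝ), IsFacet Q F →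
    ∃ b : Module.Basis (Fin d) ℤ (Fin d → ℤ),
      (Set.range fun i => fun k => ((b i k : ℤ) : ℝ)) = Set.extremePoints ℝ F

/-- A maximal chain `0̂ = c 0 < c 1 < ⋯ < c m = 1̂` of `P̂` (of length `m`). -/
def IsMaxChainHat {d : ℕ} (P : PartialOrder (Fin d)) {m : ℕ} (c : Fin (m + 1) → HatP d) : Prop :=
  c 0 = hatBot d ∧ c (Fin.last m) = hatTop d ∧
    ∀ j : Fin m, IsCover P (c j.castSucc) (c j.succ)

/-- `P` is pure: all maximal chains of `P̂` have the same length. -/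
def PureP {d : ℕ} (P : PartialOrder (Fin d)) : Prop :=
  ∀ (m m' : ℕ) (c : Fin (m + 1) → HatP d) (c' : Fin (m' + 1) → HatP d),
    IsMaxChainHat P c → IsMaxChainHat P c' → m = m'
section AuxOrder

variable {d : ℕ} (P : PartialOrder (Fin d))

lemma hatLE_refl (x : HatP d) : hatLE P x x := by
  rcases x with _ | (_ | a) <;> simp [hatLE]

lemma hatLE_bot (x : HatP d) : hatLE P (hatBot d) x := by
  simp [hatLE, hatBot]

lemma hatLE_top (x : HatP d) : hatLE P x (hatTop d) := by
  rcases x with _ | (_ | a) <;> simp [hatLE, hatTop]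

variable {P}

lemma hatLE_trans {x y z : HatP d} (hxy : hatLE P x y) (hyz : hatLE P y z) :
    hatLE P x z := by
  rcases x with _ | (_ | a) <;> rcases y with _ | (_ | b) <;> rcases z with _ | (_ | e) <;>
    simp_all [hatLE]
  exact P.le_trans _ _ _ hxy hyz

lemma hatLE_antisymm {x y : HatP d} (hxy : hatLE P x y) (hyx : hatLE P y x) : x = y := by
  rcases x with _ | (_ | a) <;> rcases y with _ | (_ | b) <;> simp_all [hatLE]
  exact P.le_antisymm _ _ hxy hyx

lemma hatLT_asymm {x y : HatP d} (hxy : hatLT P x y) (hyx : hatLT P y x) : False :=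
  hxy.2 (hatLE_antisymm hxy.1 hyx.1)

lemma hatLT_trans {x y z : HatP d} (hxy : hatLT P x y) (hyz : hatLT P y z) :
    hatLT P x z := by
  refine ⟨hatLE_trans hxy.1 hyz.1, fun h => ?_⟩
  subst h
  exact hatLT_asymm hxy hyz

lemma hatLT_irrefl (x : HatP d) (h : hatLT P x x) : False := h.2 rfl

/-- There is a cover above any non-top element. -/
lemma exists_cover_above (x : HatP d) (hx : x ≠ hatTop d) : ∃ b, IsCover P x b := by
  classical
  have hne : (Finset.univ.filter (fun z => hatLT P x z)).Nonempty := by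
    refine ⟨hatTop d, ?_⟩
    simp only [Finset.mem_filter, Finset.mem_univ, true_and]
    exact ⟨hatLE_top P x, hx⟩
  obtain ⟨b, hb, hbmin⟩ := Finset.exists_min_image _
    (fun z => (Finset.univ.filter (fun w => hatLT P w z)).card) hne
  simp only [Finset.mem_filter, Finset.mem_univ, true_and] at hb
  refine ⟨b, hb, fun z ⟨hxz, hzb⟩ => ?_⟩
  have hz : z ∈ Finset.univ.filter (fun z => hatLT P x z) := by
    simp only [Finset.mem_filter, Finset.mem_univ, true_and]; exact hxz
  have hcard := hbmin z hz
  have hsub : (Finset.univ.filter (fun w => hatLT P w z)) ⊂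
      (Finset.univ.filter (fun w => hatLT P w b)) := by
    refine Finset.ssubset_iff_of_subset ?_ |>.mpr ⟨z, ?_, ?_⟩
    · intro w hw
      simp only [Finset.mem_filter, Finset.mem_univ, true_and] at hw ⊢
      exact hatLT_trans hw hzb
    · simp only [Finset.mem_filter, Finset.mem_univ, true_and]; exact hzb
    · simp only [Finset.mem_filter, Finset.mem_univ, true_and]
      exact fun h => hatLT_irrefl z h
  exact absurd hcard (by simpa using Nat.not_le.mpr (Finset.card_lt_card hsub))

/-- There is a cover below any non-bot element. -/
lemma exists_cover_below (x : HatP d) (hx : x ≠ hatBot d) : ∃ a, IsCover P a x := by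
  classical
  have hne : (Finset.univ.filter (fun z => hatLT P z x)).Nonempty := by
    refine ⟨hatBot d, ?_⟩
    simp only [Finset.mem_filter, Finset.mem_univ, true_and]
    exact ⟨hatLE_bot P x, fun h => hx h.symm⟩
  obtain ⟨a, ha, hamin⟩ := Finset.exists_min_image _
    (fun z => (Finset.univ.filter (fun w => hatLT P z w)).card) hne
  simp only [Finset.mem_filter, Finset.mem_univ, true_and] at ha
  refine ⟨a, ha, fun z ⟨haz, hzx⟩ => ?_⟩
  have hz : z ∈ Finset.univ.filter (fun z => hatLT P z x) := by
    simp only [Finset.mem_filter, Finset.mem_univ, true_and]; exact hzx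
  have hcard := hamin z hz
  have hsub : (Finset.univ.filter (fun w => hatLT P z w)) ⊂
      (Finset.univ.filter (fun w => hatLT P a w)) := by
    refine Finset.ssubset_iff_of_subset ?_ |>.mpr ⟨z, ?_, ?_⟩
    · intro w hw
      simp only [Finset.mem_filter, Finset.mem_univ, true_and] at hw ⊢
      exact hatLT_trans haz hw
    · simp only [Finset.mem_filter, Finset.mem_univ, true_and]; exact haz
    · simp only [Finset.mem_filter, Finset.mem_univ, true_and]
      exact fun h => hatLT_irrefl z h
  exact absurd hcard (by simpa using Nat.not_le.mpr (Finset.card_lt_card hsub))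

end AuxOrder
section AuxChain

variable {d : ℕ} {P : PartialOrder (Fin d)}

/-- A saturated chain from `x` up to `1̂`. -/
lemma exists_upChain (x : HatP d) :
    ∃ (k : ℕ) (f : Fin (k + 1) → HatP d), f 0 = x ∧ f (Fin.last k) = hatTop d ∧
      ∀ j : Fin k, IsCover P (f j.castSucc) (f j.succ) := by
  classical
  generalize hn : (Finset.univ.filter (fun z => hatLT P x z)).card = n
  induction n using Nat.strong_induction_on generalizing x with
  | _ n ih =>
    by_cases hx : x = hatTop d
    · exact ⟨0, fun _ => x, rfl, by simp [hx], fun j => absurd j.2 (Nat.not_lt_zero _)⟩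
    · obtain ⟨b, hb⟩ := exists_cover_above (P := P) x hx
      have hsub : (Finset.univ.filter (fun z => hatLT P b z)) ⊂
          (Finset.univ.filter (fun z => hatLT P x z)) := by
        refine Finset.ssubset_iff_of_subset ?_ |>.mpr ⟨b, ?_, ?_⟩
        · intro w hw
          simp only [Finset.mem_filter, Finset.mem_univ, true_and] at hw ⊢
          exact hatLT_trans hb.1 hw
        · simp only [Finset.mem_filter, Finset.mem_univ, true_and]; exact hb.1
        · simp only [Finset.mem_filter, Finset.mem_univ, true_and]
          exact fun h => hatLT_irrefl b h
      have hlt : (Finset.univ.filter (fun z => hatLT P b z)).card < n := by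
        rw [← hn]; exact Finset.card_lt_card hsub
      obtain ⟨k, f, hf0, hfl, hfc⟩ := ih _ hlt b rfl
      refine ⟨k + 1, Fin.cons x f, rfl, ?_, ?_⟩
      · rw [show (Fin.last (k + 1)) = Fin.succ (Fin.last k) by rfl, Fin.cons_succ]
        exact hfl
      · intro j
        induction j using Fin.cases with
        | zero =>
          have h1 : (0 : Fin (k + 1)).succ = Fin.succ 0 := rfl
          simp only [Fin.castSucc_zero, Fin.cons_zero, Fin.cons_succ]
          rw [hf0]; exact hb
        | succ i =>
          have h1 : (Fin.succ i).castSucc = Fin.succ i.castSucc := by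
            rw [Fin.succ_castSucc]
          rw [h1, Fin.cons_succ, Fin.cons_succ]
          exact hfc i

/-- A saturated chain from `0̂` up to `x`. -/
lemma exists_downChain (x : HatP d) :
    ∃ (k : ℕ) (f : Fin (k + 1) → HatP d), f 0 = hatBot d ∧ f (Fin.last k) = x ∧
      ∀ j : Fin k, IsCover P (f j.castSucc) (f j.succ) := by
  classical
  generalize hn : (Finset.univ.filter (fun z => hatLT P z x)).card = n
  induction n using Nat.strong_induction_on generalizing x with
  | _ n ih =>
    by_cases hx : x = hatBot d
    · exact ⟨0, fun _ => x, by simp [hx], rfl, fun j => absurd j.2 (Nat.not_lt_zero _)⟩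
    · obtain ⟨a, ha⟩ := exists_cover_below (P := P) x hx
      have hsub : (Finset.univ.filter (fun z => hatLT P z a)) ⊂
          (Finset.univ.filter (fun z => hatLT P z x)) := by
        refine Finset.ssubset_iff_of_subset ?_ |>.mpr ⟨a, ?_, ?_⟩
        · intro w hw
          simp only [Finset.mem_filter, Finset.mem_univ, true_and] at hw ⊢
          exact hatLT_trans hw ha.1
        · simp only [Finset.mem_filter, Finset.mem_univ, true_and]; exact ha.1
        · simp only [Finset.mem_filter, Finset.mem_univ, true_and]
          exact fun h => hatLT_irrefl a h
      have hlt : (Finset.univ.filter (fun z => hatLT P z a)).card < n := by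
        rw [← hn]; exact Finset.card_lt_card hsub
      obtain ⟨k, f, hf0, hfl, hfc⟩ := ih _ hlt a rfl
      refine ⟨k + 1, Fin.snoc f x, ?_, ?_, ?_⟩
      · rw [show (0 : Fin (k + 2)) = Fin.castSucc 0 by rfl, Fin.snoc_castSucc]
        exact hf0
      · simp [Fin.snoc_last]
      · intro j
        induction j using Fin.lastCases with
        | last =>
          rw [show (Fin.last k).succ = Fin.last (k + 1) from Fin.succ_last k,
            Fin.snoc_last, Fin.snoc_castSucc, hfl]
          exact ha
        | cast i =>
          rw [show (i.castSucc).succ = (i.succ).castSucc from Fin.succ_castSucc i,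
            Fin.snoc_castSucc, Fin.snoc_castSucc]
          exact hfc i

end AuxChain
section AuxAnalytic

variable {d : ℕ} {P : PartialOrder (Fin d)}

lemma chi_top : chi (hatTop d) = 0 := rfl

lemma chi_bot : chi (hatBot d) = 0 := rfl

lemma chain_rho_sum {k : ℕ} (f : Fin (k + 1) → HatP d) :
    ∑ j : Fin k, rho (f j.castSucc) (f j.succ) = chi (f 0) - chi (f (Fin.last k)) := by
  induction k with
  | zero =>
    have h : (Fin.last 0) = (0 : Fin 1) := rfl
    simp [h]
  | succ k ih =>
    rw [Fin.sum_univ_succ]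
    have h := ih (fun i => f i.succ)
    have hre : ∀ i : Fin k, rho (f (i.succ).castSucc) (f (i.succ).succ)
        = rho (f (i.castSucc).succ) (f i.succ.succ) := by
      intro i; rw [Fin.succ_castSucc]
    rw [Finset.sum_congr rfl (fun i _ => hre i), h]
    have h0 : (0 : Fin (k + 1)).castSucc = 0 := rfl
    have h1 : (0 : Fin (k + 1)).succ = (Fin.succ 0 : Fin (k + 2)) := rfl
    have h2 : (Fin.last k).succ = Fin.last (k + 1) := Fin.succ_last k
    rw [h0, h1, h2]
    show rho (f 0) (f (Fin.succ 0)) + _ = _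
    rw [show rho (f 0) (f (Fin.succ 0)) = chi (f 0) - chi (f (Fin.succ 0)) from rfl]
    abel

lemma mem_edgeVecs_of_cover {a b : HatP d} (h : IsCover P a b) :
    rho a b ∈ edgeVecs P := ⟨a, b, h, rfl⟩

lemma chi_eval_zero (l : (Fin d → ℝ) →L[ℝ] ℝ) (hl : ∀ v ∈ edgeVecs P, l v ≤ 0)
    (x : HatP d) : l (chi x) = 0 := by
  have hup : l (chi x) ≤ 0 := by
    obtain ⟨k, f, hf0, hfl, hfc⟩ := exists_upChain (P := P) x
    have hsum := congrArg l (chain_rho_sum f)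
    rw [map_sum, hf0, hfl, chi_top, map_sub, map_zero, sub_zero] at hsum
    rw [← hsum]
    exact Finset.sum_nonpos fun j _ => hl _ (mem_edgeVecs_of_cover (hfc j))
  have hdn : 0 ≤ l (chi x) := by
    obtain ⟨k, f, hf0, hfl, hfc⟩ := exists_downChain (P := P) x
    have hsum := congrArg l (chain_rho_sum f)
    rw [map_sum, hf0, hfl, chi_bot, map_sub, map_zero, zero_sub] at hsum
    have : -l (chi x) ≤ 0 := by
      rw [← hsum]
      exact Finset.sum_nonpos fun j _ => hl _ (mem_edgeVecs_of_cover (hfc j))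
    linarith
  linarith

lemma edge_eval_zero (l : (Fin d → ℝ) →L[ℝ] ℝ) (hl : ∀ v ∈ edgeVecs P, l v ≤ 0)
    {v : Fin d → ℝ} (hv : v ∈ edgeVecs P) : l v = 0 := by
  obtain ⟨a, b, _, rfl⟩ := hv
  rw [show rho a b = chi a - chi b from rfl, map_sub,
    chi_eval_zero l hl a, chi_eval_zero l hl b, sub_zero]

lemma zero_mem_QPoly : (0 : Fin d → ℝ) ∈ QPoly P := by
  classical
  obtain ⟨k, f, hf0, hfl, hfc⟩ := exists_downChain (P := P) (hatTop d)
  have hk : 0 < k := by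
    rcases Nat.eq_zero_or_pos k with h | h
    · subst h
      have h01 : (0 : Fin 1) = Fin.last 0 := rfl
      rw [h01, hfl] at hf0
      simp [hatTop, hatBot] at hf0
    · exact h
  have hmem := Finset.centerMass_mem_convexHull (Finset.univ : Finset (Fin k))
    (w := fun _ => (1 : ℝ)) (z := fun j => rho (f j.castSucc) (f j.succ))
    (fun i _ => zero_le_one)
    (by simp [Finset.card_univ]; positivity)
    (fun j _ => mem_edgeVecs_of_cover (hfc j))
  have hcm : (Finset.univ : Finset (Fin k)).centerMass (fun _ => (1 : ℝ))
      (fun j => rho (f j.castSucc) (f j.succ)) = 0 := by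
    rw [Finset.centerMass]
    simp only [one_smul]
    rw [chain_rho_sum f, hf0, hfl, chi_bot, chi_top, sub_zero, smul_zero]
  rw [hcm] at hmem
  exact hmem

lemma single_mem_span (i : Fin d) :
    (fun k => if k = i then (1 : ℝ) else 0) ∈ Submodule.span ℝ (edgeVecs P) := by
  obtain ⟨k, f, hf0, hfl, hfc⟩ := exists_upChain (P := P) (some (some i))
  have heq : (fun k => if k = i then (1 : ℝ) else 0)
      = ∑ j : Fin k, rho (f j.castSucc) (f j.succ) := by
    rw [chain_rho_sum f, hf0, hfl, chi_top, sub_zero]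
    rfl
  rw [heq]
  exact Submodule.sum_mem _ fun j _ => Submodule.subset_span (mem_edgeVecs_of_cover (hfc j))

lemma vectorSpan_QPoly_eq_top : vectorSpan ℝ (QPoly P) = ⊤ := by
  refine le_antisymm le_top ?_
  have hspan : Submodule.span ℝ (edgeVecs P) ≤ vectorSpan ℝ (QPoly P) := by
    rw [Submodule.span_le]
    intro v hv
    have h1 : v ∈ QPoly P := subset_convexHull ℝ _ hv
    have h2 : v -ᵥ (0 : Fin d → ℝ) ∈ vectorSpan ℝ (QPoly P) :=
      vsub_mem_vectorSpan ℝ h1 zero_mem_QPoly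
    simpa using h2
  refine le_trans ?_ hspan
  rw [← (Pi.basisFun ℝ (Fin d)).span_eq, Submodule.span_le]
  rintro _ ⟨i, rfl⟩
  have heq : (Pi.basisFun ℝ (Fin d)) i = fun k => if k = i then (1 : ℝ) else 0 := by
    funext k
    simp [Pi.basisFun_apply, Pi.single_apply]
  rw [heq]
  exact single_mem_span i

end AuxAnalytic
/-- if a cycle `C` in `P̂` belongs to a facet of `Q_P`,
then `C` is a special cycle. -/
theorem stmt6 (d : ℕ) (hd : 1 ≤ d) (P : PartialOrder (Fin d)) (m : ℕ)
    (c : Fin (m + 1) → HatP d) (hc : IsCycle P c)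
    (hfacet : ∃ F : Set (Fin d → ℝ), IsFacet (QPoly P) F ∧
      ∀ j, rhoE P (c j) (c (j + 1)) ∈ F) :
    CycleSpecial P c := by
  classical
  obtain ⟨F, ⟨hexp, hdim⟩, hmem⟩ := hfacet
  have hFne : F.Nonempty := ⟨_, hmem 0⟩
  obtain ⟨l, hF⟩ := hexp hFne
  -- direction of each edge
  have hdir : ∀ j : Fin (m + 1),
      (IsCover P (c j) (c (j + 1)) ∧ rhoE P (c j) (c (j + 1)) = rho (c j) (c (j + 1))) ∨
      (IsCover P (c (j + 1)) (c j) ∧ rhoE P (c j) (c (j + 1)) = rho (c (j + 1)) (c j)) := by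
    intro j
    rcases hc.2.2 j with h | h
    · exact Or.inl ⟨h, if_pos h.1⟩
    · refine Or.inr ⟨h, if_neg fun h' => hatLT_asymm h' h.1⟩
  have hvE : ∀ j, rhoE P (c j) (c (j + 1)) ∈ edgeVecs P := by
    intro j
    rcases hdir j with ⟨h, he⟩ | ⟨h, he⟩ <;> rw [he] <;> exact mem_edgeVecs_of_cover h
  have hFprop : ∀ j, rhoE P (c j) (c (j + 1)) ∈ QPoly P ∧
      ∀ y ∈ QPoly P, l y ≤ l (rhoE P (c j) (c (j + 1))) := by
    intro j
    have := hmem j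
    rw [hF] at this
    exact this
  set α : ℝ := l (rhoE P (c 0) (c 1)) with hα
  have hval : ∀ j, l (rhoE P (c j) (c (j + 1))) = α := by
    intro j
    have h01 : (0 : Fin (m + 1)) + 1 = 1 := zero_add _
    refine le_antisymm ?_ ?_
    · have := (hFprop 0).2 _ (hFprop j).1
      rwa [h01] at this
    · have := (hFprop j).2 _ (hFprop 0).1
      rwa [h01] at this
  rcases le_or_gt α 0 with hneg | hpos
  · -- impossible: the facet would be all of Q_P
    exfalso
    have hle0 : ∀ w ∈ edgeVecs P, l w ≤ 0 := by
      intro w hw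
      have h1 : l w ≤ l (rhoE P (c 0) (c 1)) := by
        have := (hFprop 0).2 w (subset_convexHull ℝ _ hw)
        rwa [show (0 : Fin (m + 1)) + 1 = 1 from zero_add _] at this
      exact le_trans h1 hneg
    have hQ0 : ∀ y ∈ QPoly P, l y = 0 := by
      have hsub : QPoly P ⊆ {x | l x = (0 : ℝ)} := by
        apply convexHull_min
        · intro w hw
          exact edge_eval_zero l hle0 hw
        · have heq : {x : Fin d → ℝ | l x = 0} = ↑(LinearMap.ker (l : (Fin d → ℝ) →ₗ[ℝ] ℝ)) := by
            ext x
            simp [LinearMap.mem_ker]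
          rw [heq]
          exact (LinearMap.ker (l : (Fin d → ℝ) →ₗ[ℝ] ℝ)).convex
      exact fun y hy => hsub hy
    have hFQ : F = QPoly P := by
      rw [hF]
      ext x
      simp only [Set.mem_setOf_eq]
      exact ⟨fun h => h.1, fun h => ⟨h, fun y hy => by rw [hQ0 y hy, hQ0 x h]⟩⟩
    rw [hFQ, vectorSpan_QPoly_eq_top] at hdim
    have htop : Module.finrank ℝ (⊤ : Submodule ℝ (Fin d → ℝ)) = d := by
      rw [finrank_top]
      simp [Module.finrank_fintype_fun_eq_card]
    omega
  · -- the genuine case: count ascents and descents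
    have hlw : ∀ j : Fin (m + 1), l (chi (c j) - chi (c (j + 1)))
        = if hatLT P (c j) (c (j + 1)) then α else -α := by
      intro j
      rcases hdir j with ⟨h, he⟩ | ⟨h, he⟩
      · rw [if_pos h.1, ← hval j, he]
        rfl
      · rw [if_neg fun h' => hatLT_asymm h' h.1]
        have : chi (c j) - chi (c (j + 1)) = -(chi (c (j + 1)) - chi (c j)) := by abel
        rw [this, map_neg, ← hval j, he]
        rfl
    have hsum0 : ∑ j : Fin (m + 1), l (chi (c j) - chi (c (j + 1))) = 0 := by
      rw [← map_sum]
      have htel : ∑ j : Fin (m + 1), (chi (c j) - chi (c (j + 1))) = 0 := by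
        rw [Finset.sum_sub_distrib, sub_eq_zero]
        exact Fintype.sum_equiv (Equiv.subRight (1 : Fin (m + 1)))
          (fun j => chi (c j)) (fun j => chi (c (j + 1))) (fun x => by simp)
      rw [htel, map_zero]
    set A := Finset.univ.filter (fun j : Fin (m + 1) => hatLT P (c j) (c (j + 1))) with hA
    set B := Finset.univ.filter
      (fun j : Fin (m + 1) => ¬ hatLT P (c j) (c (j + 1))) with hB
    have hsplit : (A.card : ℝ) * α + (B.card : ℝ) * (-α) = 0 := by
      have h1 : ∑ j ∈ A, l (chi (c j) - chi (c (j + 1))) = (A.card : ℝ) * α := by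
        rw [Finset.sum_congr rfl (fun j hj => by
          rw [hlw j, if_pos (by simpa [hA] using hj)])]
        simp [mul_comm]
      have h2 : ∑ j ∈ B, l (chi (c j) - chi (c (j + 1))) = (B.card : ℝ) * (-α) := by
        rw [Finset.sum_congr rfl (fun j hj => by
          rw [hlw j, if_neg (by simpa [hB] using hj)])]
        simp [mul_comm]
      rw [← h1, ← h2, Finset.sum_filter_add_sum_filter_not]
      exact hsum0
    have hcard : A.card = B.card := by
      have hreal : (A.card : ℝ) = (B.card : ℝ) := by
        have hα0 : α ≠ 0 := ne_of_gt hpos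
        have : ((A.card : ℝ) - (B.card : ℝ)) * α = 0 := by ring_nf; linarith [hsplit]
        have := mul_eq_zero.mp this
        rcases this with h | h
        · linarith [h]
        · exact absurd h hα0
      exact_mod_cast hreal
    have hBalt : B = Finset.univ.filter
        (fun j : Fin (m + 1) => hatLT P (c (j + 1)) (c j)) := by
      rw [hB]
      apply Finset.filter_congr
      intro j _
      constructor
      · intro hn
        rcases hdir j with ⟨h, _⟩ | ⟨h, _⟩
        · exact absurd h.1 hn
        · exact h.1
      · exact fun h h' => hatLT_asymm h' h
    unfold CycleSpecial
    rw [Nat.card_eq_fintype_card, Nat.card_eq_fintype_card,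
      Fintype.card_subtype, Fintype.card_subtype]
    rw [← hBalt, ← hA]
    exact hcard
end

section
/- Let Γ = (y_{i_1}, …, y_{i_m}) be a special path in P̂ with y_{i_1} = y_0 and y_{i_m} = y_{d+1}, and for 1 ≤ j ≤ m−1 set q_j = 1 if y_{i_j} < y_{i_{j+1}} and q_j = −1 if y_{i_j} > y_{i_{j+1}}. Then \sum_{j=1}^{m-1} q_j ρ({y_{i_j}, y_{i_{j+1}}}) = (0, …, 0); in particular the points ρ({y_{i_j}, y_{i_{j+1}}}), 1 ≤ j ≤ m−1, are not affinely independent. -/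
open scoped Classical

lemma tele_sum {M : Type*} [AddCommGroup M] :
    ∀ (m : ℕ) (f : Fin (m + 1) → M),
      ∑ j : Fin m, (f j.castSucc - f j.succ) = f 0 - f (Fin.last m) := by
  intro m
  induction m with
  | zero => intro f; simp [Fin.last]
  | succ m ih =>
    intro f
    rw [Fin.sum_univ_castSucc]
    have h := ih (f ∘ Fin.castSucc)
    simp only [Function.comp] at h
    have e1 : ∀ j : Fin m,
        f (j.castSucc.castSucc) - f (j.castSucc.succ)
          = f (j.castSucc.castSucc) - f (j.succ.castSucc) := by
      intro j; rw [Fin.succ_castSucc]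
    calc (∑ j : Fin m, (f j.castSucc.castSucc - f j.castSucc.succ))
          + (f (Fin.last m).castSucc - f (Fin.last m).succ)
        = (∑ j : Fin m, (f j.castSucc.castSucc - f j.succ.castSucc))
          + (f (Fin.last m).castSucc - f (Fin.last m).succ) := by
          rw [Finset.sum_congr rfl fun j _ => e1 j]
      _ = (f 0 - f (Fin.last m).castSucc)
          + (f (Fin.last m).castSucc - f (Fin.last m).succ) := by rw [h, Fin.castSucc_zero]
      _ = f 0 - f (Fin.last (m + 1)) := by
          rw [Fin.succ_last]; abel

lemma hatLE_antisymm_s10 {d : ℕ} (P : PartialOrder (Fin d)) :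
    ∀ a b : HatP d, hatLE P a b → hatLE P b a → a = b
  | none, none, _, _ => rfl
  | none, some none, _, h2 => h2.elim
  | none, some (some _), _, h2 => h2.elim
  | some none, none, h1, _ => h1.elim
  | some none, some none, _, _ => rfl
  | some none, some (some _), h1, _ => h1.elim
  | some (some _), none, h1, _ => h1.elim
  | some (some _), some none, _, h2 => h2.elim
  | some (some a), some (some b), h1, h2 => by rw [P.le_antisymm a b h1 h2]

/-- for a special path `Γ` in `P̂` from `y₀ = 0̂` to `y_{d+1} = 1̂`, with
`q_j = 1` for ascending steps and `q_j = -1` for descending steps,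
`∑_j q_j ρ({c j, c (j+1)}) = 0`; in particular the points `ρ({c j, c (j+1)})` are not
affinely independent. -/
theorem stmt10 (d : ℕ) (hd : 1 ≤ d) (P : PartialOrder (Fin d)) (m : ℕ)
    (c : Fin (m + 1) → HatP d) (hc : IsPath P c) (hs : PathSpecial P c)
    (h0 : c 0 = hatBot d) (h1 : c (Fin.last m) = hatTop d) :
    (∑ j : Fin m,
      (if hatLT P (c j.castSucc) (c j.succ) then (1 : ℝ) else -1) •
        rhoE P (c j.castSucc) (c j.succ)) = 0 ∧
    ¬ AffineIndependent ℝ (fun j : Fin m => rhoE P (c j.castSucc) (c j.succ)) := by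

  classical
  have antis : ∀ j : Fin m, ¬ hatLT P (c j.castSucc) (c j.succ) →
      hatLT P (c j.succ) (c j.castSucc) := fun j h =>
    (hc.2 j).elim (fun hcov => (h hcov.1).elim) (fun hcov => hcov.1)
  have notboth : ∀ j : Fin m, hatLT P (c j.castSucc) (c j.succ) →
      ¬ hatLT P (c j.succ) (c j.castSucc) := fun j h1 h2 =>
    h1.2 (hatLE_antisymm_s10 P _ _ h1.1 h2.1)
  have step : ∀ j : Fin m,
      (if hatLT P (c j.castSucc) (c j.succ) then (1 : ℝ) else -1) •
        rhoE P (c j.castSucc) (c j.succ) = chi (c j.castSucc) - chi (c j.succ) := by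
    intro j
    by_cases h : hatLT P (c j.castSucc) (c j.succ)
    · simp [h, rhoE, rho]
    · simp [h, rhoE, rho, neg_sub]
  have hsum : (∑ j : Fin m,
      (if hatLT P (c j.castSucc) (c j.succ) then (1 : ℝ) else -1) •
        rhoE P (c j.castSucc) (c j.succ)) = 0 := by
    rw [Finset.sum_congr rfl fun j _ => step j, tele_sum m (fun j => chi (c j)), h0, h1]
    simp [hatBot, hatTop, chi]
  refine ⟨hsum, ?_⟩
  have hm : m ≠ 0 := by
    rintro rfl
    have : c 0 = hatTop d := h1
    rw [h0] at this
    simp [hatBot, hatTop] at this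
  set w : Fin m → ℝ := fun j =>
    if hatLT P (c j.castSucc) (c j.succ) then (1 : ℝ) else -1 with hw
  have hcard : (Finset.univ.filter fun j : Fin m =>
        hatLT P (c j.castSucc) (c j.succ)).card =
      (Finset.univ.filter fun j : Fin m =>
        hatLT P (c j.succ) (c j.castSucc)).card := by
    simpa [PathSpecial, Nat.card_eq_fintype_card, Fintype.card_subtype] using hs
  have hw0 : ∑ j : Fin m, w j = 0 := by
    have hsplit : ∀ j : Fin m, w j =
        (if hatLT P (c j.castSucc) (c j.succ) then (1 : ℝ) else 0) -
        (if hatLT P (c j.succ) (c j.castSucc) then (1 : ℝ) else 0) := by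
      intro j
      by_cases h : hatLT P (c j.castSucc) (c j.succ)
      · simp [hw, h, notboth j h]
      · simp [hw, h, antis j h]
    rw [Finset.sum_congr rfl fun j _ => hsplit j, Finset.sum_sub_distrib,
      Finset.sum_boole, Finset.sum_boole, hcard, sub_self]
  intro hA
  have j0 : Fin m := ⟨0, Nat.pos_of_ne_zero hm⟩
  have := affineIndependent_iff.1 hA Finset.univ w hw0 hsum j0 (Finset.mem_univ _)
  by_cases h : hatLT P (c j0.castSucc) (c j0.succ) <;> simp [hw, h] at this
end
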